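/- Let λ : ℕ → (0,∞) satisfy λ(n) = o(n) and converge to a finite positive limit, and let β(n) = log^{(K)} n for some finite integer K > 1. Then there exist a sequence m(n) of test numbers with m(n) ≤ (3/log₂ 3)·β(n)·λ(n)·log₂ n·(1+o(1)), probability distributions μ_n on the set of m(n)×n binary test matrices, and decoders g_n : {0,1}^{m(n)×n} × {0,1}^{m(n)} → 2^{{1,…,n}} such that, with C_n drawn from μ_n independently of the defective set 𝒟_n of the Poisson PGT model on n subjects with parameter λ(n), and y_n the outcome vector, the error probability P(g_n(C_n, y_n) ≠ 𝒟_n) tends to 0 as n → ∞. -/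

import Mathlib

open Filter Finset

/-- The `K`-fold iterated natural logarithm. -/
noncomputable def iterLog : ℕ → ℝ → ℝ
  | 0, x => x
  | (K + 1), x => Real.log (iterLog K x)

/-- `P(𝒟 = S)` in the Poisson PGT model on `n` subjects with parameter `lam`. -/
noncomputable def pgtWeight (n : ℕ) (lam : ℝ) (S : Finset (Fin n)) : ℝ :=
  (Real.exp lam / ∑ d ∈ Finset.range (n + 1), lam ^ d / d.factorial) *
    lam ^ S.card * Real.exp (-lam) * (n - S.card).factorial / n.factorial

/-- Outcome vector: test `j` is positive iff some defective participates in it. -/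
def outcome {m n : ℕ} (C : Fin m → Fin n → Bool) (S : Finset (Fin n)) : Fin m → Bool :=
  fun j => decide (∃ i ∈ S, C j i = true)

/-!
Test with an i.i.d. Bernoulli(1/2) design and decode with COMP, which returns every item that
occurs in no negative test. COMP never misses a defective, and when `|𝒟| = s` a fixed
non-defective is wrongly kept iff no test contains it without a defective, which has probability
`(1 - 2^-(s+1))^m`. A union bound over the `n` items bounds the error on `|𝒟| ≤ d` by
`n exp(-m / 2^(d+1))`, at most `exp(-(⌊log₂ n⌋ + 1))` for `m = 2^(d+2) (⌊log₂ n⌋ + 1)`, while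
`P(|𝒟| > d)` is at most the tail beyond `d` of the exponential series at an upper bound of `λ`.
Since `β → ∞`, letting `d → ∞` is compatible with `2^d ≤ L β / 16` (`L = lim λ`), which keeps
`m ≤ λ β log₂ n`.
-/

section UniformBits

variable {ι : Type*} [Fintype ι] [DecidableEq ι]

lemma sum_half_pow_card :
    ∑ _x : ι → Bool, (1 / 2 : ℝ) ^ Fintype.card ι = 1 := by
  simp

lemma sum_half_pow_mul (m n : ℕ) : ∑ _C : Fin m → Fin n → Bool, (1 / 2 : ℝ) ^ (m * n) = 1 := by
  simp [pow_mul']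

lemma sum_half_pow_mul_prod_rows (m : ℕ) (f : (ι → Bool) → ℝ) :
    ∑ C : Fin m → ι → Bool, (1 / 2 : ℝ) ^ (m * Fintype.card ι) * ∏ j, f (C j) =
      (∑ x : ι → Bool, (1 / 2 : ℝ) ^ Fintype.card ι * f x) ^ m := by
  rw [Fintype.sum_pow]
  refine Fintype.sum_congr _ _ fun C => ?_
  rw [Finset.prod_mul_distrib, Finset.prod_const, Finset.card_univ, Fintype.card_fin, ← pow_mul,
    mul_comm (Fintype.card ι)]

lemma sum_half_pow_mul_agreeOn (T : Finset ι) (z : ι → Bool) :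
    ∑ x : ι → Bool, (1 / 2 : ℝ) ^ Fintype.card ι * (if ∀ j ∈ T, x j = z j then 1 else 0) =
      (1 / 2 : ℝ) ^ T.card := by
  let φ : ι → Bool → ℝ := fun j b => 1 / 2 * if j ∈ T then (if b = z j then 1 else 0) else 1
  have hfactor : ∀ x : ι → Bool,
      (1 / 2 : ℝ) ^ Fintype.card ι * (if ∀ j ∈ T, x j = z j then 1 else 0) = ∏ j, φ j (x j) := by
    intro x
    rw [Finset.prod_mul_distrib, Finset.prod_const, Finset.card_univ, Finset.prod_ite_mem,
      Finset.univ_inter, Finset.prod_boole]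
    simp
  have hbit : ∀ j, ∑ b, φ j b = if j ∈ T then 1 / 2 else 1 := by
    intro j
    split_ifs <;> cases z j <;> norm_num [φ, *]
  rw [Fintype.sum_congr _ _ hfactor, ← Fintype.prod_sum φ, Fintype.prod_congr _ _ hbit,
    Finset.prod_ite_mem, Finset.univ_inter, Finset.prod_const]

lemma sum_half_pow_mul_isolates {S : Finset ι} {i : ι} (hi : i ∉ S) :
    ∑ x : ι → Bool, (1 / 2 : ℝ) ^ Fintype.card ι *
        (if x i = true ∧ ∀ k ∈ S, x k = false then 1 else 0) = (1 / 2 : ℝ) ^ (S.card + 1) := by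
  have hpattern : ∀ x : ι → Bool,
      (x i = true ∧ ∀ k ∈ S, x k = false) ↔ ∀ k ∈ insert i S, x k = decide (k = i) := by
    intro x
    simp only [Finset.mem_insert, forall_eq_or_imp, decide_true]
    refine and_congr_right fun _ => forall₂_congr fun k hk => ?_
    rw [decide_eq_false (ne_of_mem_of_not_mem hk hi)]
  simp_rw [hpattern, sum_half_pow_mul_agreeOn, Finset.card_insert_of_notMem hi]

end UniformBits

-- COMP ("combinatorial orthogonal matching pursuit") decoder.
def compDecode {m n : ℕ} (C : Fin m → Fin n → Bool) (y : Fin m → Bool) : Finset (Fin n) :=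
  univ.filter fun i => ∀ j, C j i = true → y j = true

section compDecode

variable {m n : ℕ}

lemma subset_compDecode_outcome (C : Fin m → Fin n → Bool) (S : Finset (Fin n)) :
    S ⊆ compDecode C (outcome C S) := by
  intro i hi
  simp only [compDecode, outcome, Finset.mem_filter, Finset.mem_univ, true_and, decide_eq_true_eq]
  exact fun j hj => ⟨i, hi, hj⟩

lemma mem_compDecode_outcome_iff (C : Fin m → Fin n → Bool) (S : Finset (Fin n)) (i : Fin n) :
    i ∈ compDecode C (outcome C S) ↔ ∀ j, ¬(C j i = true ∧ ∀ k ∈ S, C j k = false) := by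
  simp [compDecode, outcome]

lemma compDecode_outcome_ne_le_sum (C : Fin m → Fin n → Bool) (S : Finset (Fin n)) :
    (if compDecode C (outcome C S) ≠ S then 1 else 0 : ℝ) ≤
      ∑ i ∈ Sᶜ, if i ∈ compDecode C (outcome C S) then 1 else 0 := by
  split_ifs with hne
  · obtain ⟨i, hi, hiS⟩ := Finset.not_subset.mp fun h =>
      hne (h.antisymm (subset_compDecode_outcome C S))
    calc (1 : ℝ) = if i ∈ compDecode C (outcome C S) then 1 else 0 := (if_pos hi).symm
      _ ≤ _ := Finset.single_le_sum (f := fun i => if i ∈ compDecode C (outcome C S) then 1 else 0)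
          (fun _ _ => by positivity) (Finset.mem_compl.mpr hiS)
  · exact Finset.sum_nonneg fun _ _ => by positivity

lemma sum_half_pow_mul_mem_compDecode {S : Finset (Fin n)} {i : Fin n} (hi : i ∉ S) :
    ∑ C : Fin m → Fin n → Bool, (1 / 2 : ℝ) ^ (m * n) *
        (if i ∈ compDecode C (outcome C S) then 1 else 0) =
      (1 - (1 / 2 : ℝ) ^ (S.card + 1)) ^ m := by
  have hindicator : ∀ C : Fin m → Fin n → Bool,
      (if i ∈ compDecode C (outcome C S) then 1 else 0 : ℝ) =
        ∏ j, (if ¬(C j i = true ∧ ∀ k ∈ S, C j k = false) then 1 else 0) := by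
    simp [Finset.prod_boole, mem_compDecode_outcome_iff]
  have hrow : ∑ x : Fin n → Bool, (1 / 2 : ℝ) ^ Fintype.card (Fin n) *
      (if ¬(x i = true ∧ ∀ k ∈ S, x k = false) then 1 else 0) =
        1 - (1 / 2 : ℝ) ^ (S.card + 1) := by
    rw [← sum_half_pow_mul_isolates hi, eq_sub_iff_add_eq, ← Finset.sum_add_distrib]
    refine (Fintype.sum_congr _ _ fun x => ?_).trans (sum_half_pow_card (ι := Fin n))
    split_ifs <;> simp_all
  simp_rw [hindicator]
  rw [← hrow, ← sum_half_pow_mul_prod_rows, Fintype.card_fin]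

lemma sum_half_pow_mul_compDecode_ne_le (S : Finset (Fin n)) :
    ∑ C : Fin m → Fin n → Bool, (1 / 2 : ℝ) ^ (m * n) *
        (if compDecode C (outcome C S) ≠ S then 1 else 0) ≤
      n * (1 - (1 / 2 : ℝ) ^ (S.card + 1)) ^ m :=
  calc _ ≤ ∑ C : Fin m → Fin n → Bool, ∑ i ∈ Sᶜ, (1 / 2 : ℝ) ^ (m * n) *
          (if i ∈ compDecode C (outcome C S) then 1 else 0) := by
        gcongr with C
        rw [← Finset.mul_sum]
        exact mul_le_mul_of_nonneg_left (compDecode_outcome_ne_le_sum C S) (by positivity)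
    _ = Sᶜ.card * (1 - (1 / 2 : ℝ) ^ (S.card + 1)) ^ m := by
        rw [Finset.sum_comm, Finset.sum_congr rfl fun i hi =>
          sum_half_pow_mul_mem_compDecode (Finset.mem_compl.mp hi), Finset.sum_const,
          nsmul_eq_mul]
    _ ≤ n * (1 - (1 / 2 : ℝ) ^ (S.card + 1)) ^ m := by
        gcongr
        · exact pow_nonneg (sub_nonneg.mpr (pow_le_one₀ (by norm_num) (by norm_num))) _
        · simpa using Finset.card_le_univ Sᶜ

end compDecode

lemma sum_filter_lt_le_sub_sum_range {f : ℕ → ℝ} {a : ℝ} (hf : ∀ k, 0 ≤ f k) (h : HasSum f a)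
    (s : Finset ℕ) (d : ℕ) :
    ∑ k ∈ s with d < k, f k ≤ a - ∑ k ∈ range (d + 1), f k := by
  rw [le_sub_iff_add_le, ← Finset.sum_union]
  · exact sum_le_hasSum _ (fun k _ => hf k) h
  · refine Finset.disjoint_left.mpr fun k hk hk' => ?_
    simp only [Finset.mem_filter, Finset.mem_range] at hk hk'
    omega

lemma hasSum_pow_div_factorial_exp (x : ℝ) :
    HasSum (fun k => x ^ k / k.factorial) (Real.exp x) := by
  rw [Real.exp_eq_exp_ℝ]
  exact NormedSpace.expSeries_div_hasSum_exp x

section pgtWeight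

variable {n : ℕ} {lam : ℝ}

lemma sum_pgtWeight_mul_card (p : ℕ → ℝ) :
    ∑ S : Finset (Fin n), pgtWeight n lam S * p S.card =
      (∑ k ∈ range (n + 1), lam ^ k / k.factorial * p k) /
        ∑ k ∈ range (n + 1), lam ^ k / k.factorial := by
  set D := ∑ k ∈ range (n + 1), lam ^ k / k.factorial
  have hgroup := Finset.sum_powerset_apply_card
    (fun k => Real.exp lam / D * lam ^ k * Real.exp (-lam) * (n - k).factorial / n.factorial * p k)
    (x := (univ : Finset (Fin n)))
  simp only [Finset.powerset_univ, Finset.card_univ, Fintype.card_fin, nsmul_eq_mul] at hgroup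
  refine hgroup.trans ?_
  rw [Finset.sum_div]
  refine Finset.sum_congr rfl fun k hk => ?_
  rw [Nat.cast_choose ℝ (Nat.lt_succ_iff.mp (Finset.mem_range.mp hk))]
  have hexp : Real.exp lam * Real.exp (-lam) = 1 := by
    rw [← Real.exp_add, add_neg_cancel, Real.exp_zero]
  field_simp
  linear_combination lam ^ k * p k / D * hexp

lemma one_le_sum_range_pow_div_factorial (hlam : 0 ≤ lam) :
    1 ≤ ∑ k ∈ range (n + 1), lam ^ k / k.factorial := by
  simpa using Finset.single_le_sum (f := fun k => lam ^ k / k.factorial)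
    (fun _ _ => by positivity) (Finset.mem_range.mpr n.succ_pos)

lemma pgtWeight_nonneg (hlam : 0 ≤ lam) (S : Finset (Fin n)) : 0 ≤ pgtWeight n lam S := by
  unfold pgtWeight
  positivity

lemma sum_pgtWeight (hlam : 0 ≤ lam) : ∑ S : Finset (Fin n), pgtWeight n lam S = 1 := by
  have hD := (one_le_sum_range_pow_div_factorial (n := n) hlam).trans_lt' one_pos
  simpa [div_self hD.ne'] using sum_pgtWeight_mul_card (n := n) (lam := lam) fun _ => 1

lemma sum_pgtWeight_mul_card_gt_le {M : ℝ} (hlam : 0 ≤ lam) (hM : lam ≤ M) (d : ℕ) :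
    ∑ S : Finset (Fin n), pgtWeight n lam S * (if d < S.card then 1 else 0) ≤
      Real.exp M - ∑ k ∈ range (d + 1), M ^ k / k.factorial :=
  calc _ = (∑ k ∈ range (n + 1) with d < k, lam ^ k / k.factorial) /
        ∑ k ∈ range (n + 1), lam ^ k / k.factorial := by
        rw [sum_pgtWeight_mul_card fun k => if d < k then 1 else 0, Finset.sum_filter]
        simp only [mul_ite, mul_one, mul_zero]
    _ ≤ ∑ k ∈ range (n + 1) with d < k, lam ^ k / k.factorial :=
        div_le_self (Finset.sum_nonneg fun _ _ => by positivity)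
          (one_le_sum_range_pow_div_factorial hlam)
    _ ≤ ∑ k ∈ range (n + 1) with d < k, M ^ k / k.factorial := by gcongr
    _ ≤ Real.exp M - ∑ k ∈ range (d + 1), M ^ k / k.factorial :=
        sum_filter_lt_le_sub_sum_range
          (fun k => div_nonneg (pow_nonneg (hlam.trans hM) k) (by positivity))
          (hasSum_pow_div_factorial_exp M) _ d

end pgtWeight

lemma tendsto_sum_pgtWeight_mul_card_gt {lam : ℕ → ℝ} {d : ℕ → ℕ} {M : ℝ}
    (hlam : ∀ᶠ n in atTop, 0 ≤ lam n ∧ lam n ≤ M) (hd : Tendsto d atTop atTop) :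
    Tendsto (fun n => ∑ S : Finset (Fin n), pgtWeight n (lam n) S * (if d n < S.card then 1 else 0))
      atTop (nhds 0) := by
  have htail : Tendsto (fun n => Real.exp M - ∑ k ∈ range (d n + 1), M ^ k / k.factorial)
      atTop (nhds 0) := by
    simpa using (tendsto_const_nhds (x := Real.exp M)).sub
      ((hasSum_pow_div_factorial_exp M).tendsto_sum_nat.comp (tendsto_add_atTop_nat 1 |>.comp hd))
  refine squeeze_zero' ?_ ?_ htail
  · filter_upwards [hlam] with n hn
    exact Finset.sum_nonneg fun S _ => mul_nonneg (pgtWeight_nonneg hn.1 S) (by positivity)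
  · filter_upwards [hlam] with n hn
    exact sum_pgtWeight_mul_card_gt_le hn.1 hn.2 (d n)

lemma compDecode_error_le {m n : ℕ} {lam : ℝ} (hlam : 0 ≤ lam) (d : ℕ) :
    ∑ C : Fin m → Fin n → Bool, ∑ S : Finset (Fin n),
        (1 / 2 : ℝ) ^ (m * n) * pgtWeight n lam S *
          (if compDecode C (outcome C S) ≠ S then 1 else 0) ≤
      ∑ S : Finset (Fin n), pgtWeight n lam S * (if d < S.card then 1 else 0) +
        n * (1 - (1 / 2 : ℝ) ^ (d + 1)) ^ m := by
  set q : ℝ := n * (1 - (1 / 2 : ℝ) ^ (d + 1)) ^ m with hq_def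
  have hq : 0 ≤ q := by
    have : (1 / 2 : ℝ) ^ (d + 1) ≤ 1 := pow_le_one₀ (by norm_num) (by norm_num)
    positivity
  have hfailure : ∀ S : Finset (Fin n), ∑ C : Fin m → Fin n → Bool, (1 / 2 : ℝ) ^ (m * n) *
      (if compDecode C (outcome C S) ≠ S then 1 else 0) ≤ (if d < S.card then 1 else 0) + q := by
    intro S
    split_ifs with hd
    · calc _ ≤ ∑ _C : Fin m → Fin n → Bool, (1 / 2 : ℝ) ^ (m * n) := by
            gcongr
            split_ifs <;> norm_num
        _ ≤ 1 + q := by rw [sum_half_pow_mul]; linarith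
    · refine (sum_half_pow_mul_compDecode_ne_le S).trans ?_
      have hpow : (1 / 2 : ℝ) ^ (d + 1) ≤ (1 / 2) ^ (S.card + 1) :=
        pow_le_pow_of_le_one (by norm_num) (by norm_num) (by omega)
      rw [zero_add, hq_def]
      gcongr
      exact sub_nonneg.mpr (pow_le_one₀ (by norm_num) (by norm_num))
  calc _ = ∑ S : Finset (Fin n), pgtWeight n lam S * ∑ C : Fin m → Fin n → Bool,
        (1 / 2 : ℝ) ^ (m * n) * (if compDecode C (outcome C S) ≠ S then 1 else 0) := by
        rw [Finset.sum_comm]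
        simp_rw [Finset.mul_sum]
        ring_nf
    _ ≤ ∑ S : Finset (Fin n), pgtWeight n lam S * ((if d < S.card then 1 else 0) + q) := by
        gcongr with S
        · exact pgtWeight_nonneg hlam S
        · exact hfailure S
    _ = _ := by
        simp only [mul_add, Finset.sum_add_distrib, ← Finset.sum_mul, sum_pgtWeight hlam, one_mul]

lemma tendsto_iterLog_atTop (K : ℕ) : Tendsto (iterLog K) atTop atTop := by
  induction K with
  | zero => exact tendsto_id
  | succ K ih => exact Real.tendsto_log_atTop.comp ih

lemma tendsto_natLog_atTop {b : ℕ} (hb : 1 < b) : Tendsto (Nat.log b) atTop atTop := by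
  simp_rw [← funext (Real.natFloor_logb_natCast b)]
  exact tendsto_nat_floor_atTop.comp
    ((Real.tendsto_logb_atTop (by exact_mod_cast hb)).comp tendsto_natCast_atTop_atTop)

lemma one_sub_pow_le_exp_neg_mul {p : ℝ} (hp : p ≤ 1) (M : ℕ) :
    (1 - p) ^ M ≤ Real.exp (-(M * p)) := by
  rw [neg_mul_eq_mul_neg, Real.exp_nat_mul]
  exact pow_le_pow_left₀ (sub_nonneg.mpr hp) (Real.one_sub_le_exp_neg p) M

def testCount (d n : ℕ) : ℕ := 2 ^ (d + 2) * (Nat.log 2 n + 1)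

lemma natCast_mul_one_sub_pow_testCount_le (n d : ℕ) :
    n * (1 - (1 / 2 : ℝ) ^ (d + 1)) ^ testCount d n ≤
      Real.exp (-(Nat.log 2 n + 1)) := by
  set t : ℕ := Nat.log 2 n + 1
  have hn : (n : ℝ) ≤ Real.exp t := by
    calc (n : ℝ) ≤ 2 ^ t := by exact_mod_cast (Nat.lt_pow_succ_log_self one_lt_two n).le
      _ ≤ Real.exp 1 ^ t := by gcongr; exact Real.exp_one_gt_two.le
      _ = Real.exp t := by rw [← Real.exp_nat_mul, mul_one]
  have hmiss : (1 - (1 / 2 : ℝ) ^ (d + 1)) ^ (2 ^ (d + 2) * t) ≤ Real.exp (-(2 * t)) := by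
    refine (one_sub_pow_le_exp_neg_mul (pow_le_one₀ (by norm_num) (by norm_num)) _).trans_eq ?_
    congr 2
    have hcancel : (2 : ℝ) ^ d * (1 / 2) ^ d = 1 := by rw [← mul_pow]; norm_num
    push_cast
    linear_combination (2 * t : ℝ) * hcancel
  have hbase : 0 ≤ 1 - (1 / 2 : ℝ) ^ (d + 1) :=
    sub_nonneg.mpr (pow_le_one₀ (by norm_num) (by norm_num))
  calc _ ≤ Real.exp t * Real.exp (-(2 * t)) := by rw [testCount]; gcongr
    _ = Real.exp (-(Nat.log 2 n + 1)) := by rw [← Real.exp_add]; push_cast [t]; ring_nf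

lemma one_le_three_div_logb_two_three : 1 ≤ 3 / Real.logb 2 3 := by
  have hpos : 0 < Real.logb 2 3 := Real.logb_pos one_lt_two (by norm_num)
  rw [one_le_div hpos, Real.logb_le_iff_le_rpow one_lt_two (by norm_num)]
  norm_num

lemma two_pow_natLog_floor_le {x : ℝ} (hx : 1 ≤ x) : (2 : ℝ) ^ Nat.log 2 ⌊x⌋₊ ≤ x := by
  have hfloor : ⌊x⌋₊ ≠ 0 := Nat.one_le_iff_ne_zero.mp (Nat.one_le_floor_iff x |>.mpr hx)
  calc (2 : ℝ) ^ Nat.log 2 ⌊x⌋₊ ≤ ⌊x⌋₊ := by exact_mod_cast Nat.pow_log_le_self 2 hfloor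
    _ ≤ x := Nat.floor_le (by linarith)

lemma exists_tendsto_atTop_two_pow_le {a : ℕ → ℝ} (ha : Tendsto a atTop atTop) :
    ∃ d : ℕ → ℕ, Tendsto d atTop atTop ∧ ∀ᶠ n in atTop, (2 : ℝ) ^ d n ≤ a n :=
  ⟨fun n => Nat.log 2 ⌊a n⌋₊,
    (tendsto_natLog_atTop one_lt_two).comp (tendsto_nat_floor_atTop.comp ha),
    (ha.eventually_ge_atTop 1).mono fun _ hn => two_pow_natLog_floor_le hn⟩

lemma testCount_le {n d : ℕ} {lam b L : ℝ} (hn : 2 ≤ n) (hL : 0 < L) (hlam : L / 2 ≤ lam)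
    (hd : (2 : ℝ) ^ d ≤ L / 16 * b) :
    (testCount d n : ℝ) ≤ 3 / Real.logb 2 3 * b * lam * Real.logb 2 n := by
  have hlog : 1 ≤ Nat.log 2 n := Nat.le_log_of_pow_le one_lt_two (by simpa using hn)
  have hlogb : (Nat.log 2 n : ℝ) ≤ Real.logb 2 n := Real.natLog_le_logb n 2
  have hlogb0 : 0 ≤ Real.logb 2 n := (Nat.cast_nonneg _).trans hlogb
  have hlam0 : 0 < lam := by linarith
  have hb : 0 < b := by
    have : 0 < L / 16 * b := hd.trans_lt' (by positivity)
    exact pos_of_mul_pos_right this (by positivity)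
  calc (testCount d n : ℝ) ≤ 8 * 2 ^ d * Nat.log 2 n := by
        have : ((Nat.log 2 n : ℕ) : ℝ) + 1 ≤ 2 * Nat.log 2 n := by
          have : (1 : ℝ) ≤ Nat.log 2 n := by exact_mod_cast hlog
          linarith
        rw [testCount]; push_cast
        calc (2 : ℝ) ^ (d + 2) * (Nat.log 2 n + 1) ≤ 2 ^ (d + 2) * (2 * Nat.log 2 n) := by gcongr
          _ = 8 * 2 ^ d * Nat.log 2 n := by ring
    _ ≤ 8 * (L / 16 * b) * Real.logb 2 n := by gcongr
    _ = L / 2 * b * Real.logb 2 n := by ring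
    _ ≤ lam * b * Real.logb 2 n := by gcongr
    _ ≤ 3 / Real.logb 2 3 * (lam * b * Real.logb 2 n) :=
        le_mul_of_one_le_left (by positivity) one_le_three_div_logb_two_three
    _ = 3 / Real.logb 2 3 * b * lam * Real.logb 2 n := by ring

theorem stmt6_general (lam : ℕ → ℝ)
    (hlamlim : ∃ L : ℝ, 0 < L ∧ Tendsto lam atTop (nhds L))
    (K : ℕ)
    (β : ℕ → ℝ) (hβ : ∀ n, β n = iterLog K n) :
    ∃ (m : ℕ → ℕ)
      (μ : (n : ℕ) → (Fin (m n) → Fin n → Bool) → ℝ)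
      (g : (n : ℕ) → (Fin (m n) → Fin n → Bool) → (Fin (m n) → Bool) → Finset (Fin n))
      (δ : ℕ → ℝ),
      (∀ n C, 0 ≤ μ n C) ∧
      (∀ n, ∑ C : Fin (m n) → Fin n → Bool, μ n C = 1) ∧
      Tendsto δ atTop (nhds 0) ∧
      (∀ᶠ n in atTop,
        (m n : ℝ) ≤ 3 / Real.logb 2 3 * β n * lam n * Real.logb 2 n * (1 + δ n)) ∧
      Tendsto (fun n => ∑ C : Fin (m n) → Fin n → Bool, ∑ S : Finset (Fin n),
          μ n C * pgtWeight n (lam n) S * (if g n C (outcome C S) ≠ S then 1 else 0))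
        atTop (nhds 0) := by
  obtain ⟨L, hL, hlim⟩ := hlamlim
  have hβ_top : Tendsto (fun n => L / 16 * β n) atTop atTop := by
    simp_rw [hβ]
    exact ((tendsto_iterLog_atTop K).comp tendsto_natCast_atTop_atTop).const_mul_atTop
      (by positivity)
  obtain ⟨d, hd_top, hd_le⟩ := exists_tendsto_atTop_two_pow_le hβ_top
  have hlam : ∀ᶠ n in atTop, L / 2 ≤ lam n ∧ lam n ≤ L + 1 :=
    (hlim.eventually (eventually_ge_nhds (by linarith))).and
      (hlim.eventually (eventually_le_nhds (by linarith)))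
  have hlam0 : ∀ᶠ n in atTop, 0 ≤ lam n ∧ lam n ≤ L + 1 :=
    hlam.mono fun n hn => ⟨by linarith [hn.1], hn.2⟩
  refine ⟨fun n => testCount (d n) n, fun n _ => (1 / 2) ^ (testCount (d n) n * n),
    fun n => compDecode, fun _ => 0, fun n C => by positivity, fun n => sum_half_pow_mul _ _,
    tendsto_const_nhds, ?_, ?_⟩
  · filter_upwards [hd_le, hlam, eventually_ge_atTop 2] with n hd hn hn2
    rw [add_zero, mul_one]
    exact testCount_le hn2 hL hn.1 hd
  · have hmiss : Tendsto (fun n => Real.exp (-(Nat.log 2 n + 1))) atTop (nhds 0) :=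
      Real.tendsto_exp_neg_atTop_nhds_zero.comp (tendsto_atTop_add_const_right _ 1
        (tendsto_natCast_atTop_atTop.comp (tendsto_natLog_atTop one_lt_two)))
    refine squeeze_zero' ?_ ?_
      (by simpa only [add_zero] using (tendsto_sum_pgtWeight_mul_card_gt hlam0 hd_top).add hmiss)
    · filter_upwards [hlam0] with n hn
      exact Finset.sum_nonneg fun C _ => Finset.sum_nonneg fun S _ =>
        mul_nonneg (mul_nonneg (by positivity) (pgtWeight_nonneg hn.1 S)) (by positivity)
    · filter_upwards [hlam0] with n hn
      exact (compDecode_error_le hn.1 (d n)).trans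
        (add_le_add le_rfl (natCast_mul_one_sub_pow_testCount_le n (d n)))

theorem stmt6 (lam : ℕ → ℝ) (hpos : ∀ n, 0 < lam n)
    (hlamo : Tendsto (fun n => lam n / n) atTop (nhds 0))
    (hlamlim : ∃ L : ℝ, 0 < L ∧ Tendsto lam atTop (nhds L))
    (K : ℕ) (hK : 1 < K)
    (β : ℕ → ℝ) (hβ : ∀ n, β n = iterLog K n) :
    ∃ (m : ℕ → ℕ)
      (μ : (n : ℕ) → (Fin (m n) → Fin n → Bool) → ℝ)
      (g : (n : ℕ) → (Fin (m n) → Fin n → Bool) → (Fin (m n) → Bool) → Finset (Fin n))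
      (δ : ℕ → ℝ),
      (∀ n C, 0 ≤ μ n C) ∧
      (∀ n, ∑ C : Fin (m n) → Fin n → Bool, μ n C = 1) ∧
      Tendsto δ atTop (nhds 0) ∧
      (∀ᶠ n in atTop,
        (m n : ℝ) ≤ 3 / Real.logb 2 3 * β n * lam n * Real.logb 2 n * (1 + δ n)) ∧
      Tendsto (fun n => ∑ C : Fin (m n) → Fin n → Bool, ∑ S : Finset (Fin n),
          μ n C * pgtWeight n (lam n) S * (if g n C (outcome C S) ≠ S then 1 else 0))
        atTop (nhds 0) :=
  stmt6_general lam hlamlim K β hβ
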